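/- Let H be a real Hilbert space and let A₁ : H → 2^H and A₂ : H → 2^H be maximally monotone operators with zer(A₁+A₂) ≠ ∅. Let (b_{1,n}) and (b_{2,n}) be absolutely summable sequences in H, let x_0, v_0 ∈ H, let ε ∈ (0, 1/2), let (γ_n) be a sequence in [ε, 1−ε], and define for every n: p_{1,n} = J_{γ_n A₁}(x_n − γ_n v_n) + b_{1,n}; p_{2,n} = J_{γ_n A₂^{-1}}(v_n + γ_n x_n) + b_{2,n}; x_{n+1} = p_{1,n} + γ_n(v_n − p_{2,n}); v_{n+1} = p_{2,n} + γ_n(p_{1,n} − x_n). Then there exist x̄ ∈ zer(A₁+A₂) and v̄ ∈ zer(−A₁^{-1}∘(−Id) + A₂^{-1}) with −v̄ ∈ A₁x̄ and v̄ ∈ A₂x̄, such that x_n converges weakly to x̄ and v_n converges weakly to v̄. -/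

import Mathlib

open scoped InnerProductSpace
open Filter Topology

/-- Monotonicity of a set-valued operator on a real inner product space. -/
def MonotoneSV {H : Type*} [NormedAddCommGroup H] [InnerProductSpace ℝ H]
    (A : H → Set H) : Prop :=
  ∀ x y u v : H, u ∈ A x → v ∈ A y → 0 ≤ ⟪x - y, u - v⟫_ℝ

/-- Maximal monotonicity of a set-valued operator on a real inner product space. -/
def MaxMonotone {H : Type*} [NormedAddCommGroup H] [InnerProductSpace ℝ H]
    (A : H → Set H) : Prop :=
  MonotoneSV A ∧ ∀ x u : H, (∀ y v : H, v ∈ A y → (0:ℝ) ≤ ⟪x - y, u - v⟫_ℝ) → u ∈ A x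

/-- `J` is the resolvent `(Id + γ A)⁻¹` of `γ A`. -/
def IsResolvent {E : Type*} [AddCommGroup E] [Module ℝ E]
    (γ : ℝ) (A : E → Set E) (J : E → E) : Prop :=
  ∀ w, ∃ u ∈ A (J w), w = J w + γ • u

/-- Weak convergence of a sequence in an inner product space. -/
def WeakTendsto {H : Type*} [NormedAddCommGroup H] [InnerProductSpace ℝ H]
    (x : ℕ → H) (l : H) : Prop :=
  ∀ w : H, Filter.Tendsto (fun n => ⟪x n, w⟫_ℝ) Filter.atTop (nhds ⟪l, w⟫_ℝ)

/-!
On `H × H` with the `ℓ²` norm the iteration is Tseng's forward-backward-forward method for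
`M + S`, where `M (x, v) = A₁ x × A₂⁻¹ v` is maximally monotone and `S (x, v) = (v, -x)` is a
skew isometry; the zeros of `M + S` are exactly the pairs with `-v ∈ A₁ x` and `v ∈ A₂ x`.
For every such zero `y`, monotonicity and skewness give
`‖Tz - y‖² ≤ ‖z - y‖² - (1 - γ²) ‖z - J (z - γ S z)‖²` for the exact step `T`, so with summable
errors `‖zₙ - y‖` converges and the resolvent residual tends to `0`. Passing to the limit in the
monotonicity inequality (where the skew term `⟪q, S q⟫` vanishes) shows that every weak cluster
point is a zero, and Opial's argument yields weak convergence of the whole sequence. Weak cluster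
points are taken along ultrafilters, where Banach–Alaoglu provides the limits.
-/

section WeakConvergence

variable {E : Type*} [NormedAddCommGroup E] [InnerProductSpace ℝ E]

def WeakTendstoAlong {ι : Type*} (z : ι → E) (f : Filter ι) (l : E) : Prop :=
  ∀ w : E, Tendsto (fun i => ⟪z i, w⟫_ℝ) f (𝓝 ⟪l, w⟫_ℝ)

theorem WeakTendstoAlong.of_tendsto_norm_sub {ι : Type*} {f : Filter ι} {z q : ι → E} {l : E}
    (hz : WeakTendstoAlong z f l) (hzq : Tendsto (fun i => ‖z i - q i‖) f (𝓝 0)) :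
    WeakTendstoAlong q f l := by
  intro w
  have hsub : Tendsto (fun i => ⟪z i - q i, w⟫_ℝ) f (𝓝 0) :=
    squeeze_zero_norm (fun i => norm_inner_le_norm _ _) (by simpa using hzq.mul_const ‖w‖)
  simpa [inner_sub_left] using (hz w).sub hsub

theorem exists_weakTendstoAlong_of_norm_le [CompleteSpace E] {ι : Type*} {z : ι → E} {C : ℝ}
    (hC : ∀ i, ‖z i‖ ≤ C) (U : Ultrafilter ι) : ∃ l, WeakTendstoAlong z U l := by
  let φ : ι → WeakDual ℝ E := fun i => StrongDual.toWeakDual (InnerProductSpace.toDual ℝ E (z i))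
  have hmem : ∀ i, φ i ∈ WeakDual.toStrongDual ⁻¹' Metric.closedBall 0 C := fun i => by
    simpa [φ] using hC i
  obtain ⟨ψ, -, hψ⟩ := (WeakDual.isCompact_closedBall (𝕜 := ℝ) 0 C).ultrafilter_le_nhds
    (U.map φ) (Filter.le_principal_iff.mpr (Filter.mem_map.mpr (Eventually.of_forall hmem)))
  refine ⟨(InnerProductSpace.toDual ℝ E).symm (WeakDual.toStrongDual ψ), fun w => ?_⟩
  have hψw : Tendsto (fun i => φ i w) U (𝓝 (ψ w)) :=
    ((WeakDual.eval_continuous w).tendsto ψ).comp hψ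
  have hlim : ⟪(InnerProductSpace.toDual ℝ E).symm (WeakDual.toStrongDual ψ), w⟫_ℝ = ψ w := by
    rw [← InnerProductSpace.toDual_apply_apply (𝕜 := ℝ), LinearIsometryEquiv.apply_symm_apply]
    rfl
  rw [hlim]
  exact hψw

theorem exists_tendsto_inner_of_tendsto_norm_sub {ι : Type*} {f : Filter ι} {z : ι → E}
    {a b : E} {La Lb : ℝ} (ha : Tendsto (fun i => ‖z i - a‖) f (𝓝 La))
    (hb : Tendsto (fun i => ‖z i - b‖) f (𝓝 Lb)) :
    ∃ K, Tendsto (fun i => ⟪z i, a - b⟫_ℝ) f (𝓝 K) := by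
  have hpolar : ∀ i, ⟪z i, a - b⟫_ℝ
      = (‖a‖ ^ 2 - ‖b‖ ^ 2 - (‖z i - a‖ ^ 2 - ‖z i - b‖ ^ 2)) / 2 := fun i => by
    rw [norm_sub_sq_real, norm_sub_sq_real, inner_sub_right]
    ring
  exact ⟨_, (tendsto_const_nhds.sub ((ha.pow 2).sub (hb.pow 2))).div_const 2 |>.congr
    fun i => (hpolar i).symm⟩

/-- Opial's lemma. -/
theorem exists_weakTendsto_of_tendsto_norm_sub [CompleteSpace E] {z : ℕ → E} {F : Set E}
    (hF : F.Nonempty) (hnorm : ∀ y ∈ F, ∃ L, Tendsto (fun n => ‖z n - y‖) atTop (𝓝 L))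
    (hclust : ∀ (U : Ultrafilter ℕ) (l : E), (U : Filter ℕ) ≤ atTop →
      WeakTendstoAlong z U l → l ∈ F) :
    ∃ l ∈ F, WeakTendsto z l := by
  obtain ⟨y₀, hy₀⟩ := hF
  obtain ⟨L₀, hL₀⟩ := hnorm y₀ hy₀
  obtain ⟨R, hR⟩ := hL₀.bddAbove_range
  have hbdd : ∀ n, ‖z n‖ ≤ R + ‖y₀‖ := fun n => by
    have := norm_le_norm_sub_add (z n) y₀
    linarith [hR (Set.mem_range_self n)]
  have hcluster : ∀ U : Ultrafilter ℕ, (U : Filter ℕ) ≤ atTop →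
      ∃ l ∈ F, WeakTendstoAlong z U l := fun U hU => by
    obtain ⟨l, hl⟩ := exists_weakTendstoAlong_of_norm_le hbdd U
    exact ⟨l, hclust U l hU hl, hl⟩
  have huniq : ∀ (U U' : Ultrafilter ℕ) (l l' : E), (U : Filter ℕ) ≤ atTop →
      (U' : Filter ℕ) ≤ atTop → l ∈ F → l' ∈ F →
      WeakTendstoAlong z U l → WeakTendstoAlong z U' l' → l = l' := by
    intro U U' l l' hU hU' hlF hl'F hl hl'
    obtain ⟨L, hL⟩ := hnorm l hlF
    obtain ⟨L', hL'⟩ := hnorm l' hl'F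
    obtain ⟨K, hK⟩ := exists_tendsto_inner_of_tendsto_norm_sub hL hL'
    have h : ⟪l, l - l'⟫_ℝ = ⟪l', l - l'⟫_ℝ :=
      (tendsto_nhds_unique (hl _) (hK.mono_left hU)).trans
        (tendsto_nhds_unique (hl' _) (hK.mono_left hU')).symm
    rw [← sub_eq_zero, ← inner_sub_left, inner_self_eq_zero, sub_eq_zero] at h
    exact h
  obtain ⟨U₀, hU₀⟩ := Ultrafilter.exists_le (atTop : Filter ℕ)
  obtain ⟨l, hlF, hl⟩ := hcluster U₀ hU₀
  refine ⟨l, hlF, fun w => (tendsto_iff_ultrafilter _ _ _).mpr fun U hU => ?_⟩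
  obtain ⟨l', hl'F, hl'⟩ := hcluster U hU
  exact huniq U U₀ l' l hU hU₀ hl'F hlF hl' hl ▸ hl' w

end WeakConvergence

section QuasiFejer

theorem exists_tendsto_of_le_add_summable {a c : ℕ → ℝ} (ha : ∀ n, 0 ≤ a n)
    (hc : ∀ n, 0 ≤ c n) (hcs : Summable c) (h : ∀ n, a (n + 1) ≤ a n + c n) :
    ∃ L, Tendsto a atTop (𝓝 L) := by
  let s : ℕ → ℝ := fun n => ∑ k ∈ Finset.range n, c k
  have hanti : Antitone (fun n => a n - s n) := antitone_nat_of_succ_le fun n => by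
    simp only [s, Finset.sum_range_succ]
    linarith [h n]
  have hbdd : BddBelow (Set.range fun n => a n - s n) := ⟨-∑' k, c k, by
    rintro _ ⟨n, rfl⟩
    linarith [ha n, hcs.sum_le_tsum (Finset.range n) fun k _ => hc k]⟩
  exact ⟨_, by simpa [s] using (tendsto_atTop_ciInf hanti hbdd).add hcs.hasSum.tendsto_sum_nat⟩

theorem summable_of_le_sub_add_summable {a d c : ℕ → ℝ} (ha : ∀ n, 0 ≤ a n)
    (hd : ∀ n, 0 ≤ d n) (hc : ∀ n, 0 ≤ c n) (hcs : Summable c)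
    (h : ∀ n, a (n + 1) ≤ a n - d n + c n) : Summable d := by
  have hpartial : ∀ n, ∑ k ∈ Finset.range n, d k ≤ a 0 - a n + ∑ k ∈ Finset.range n, c k := by
    intro n
    induction n with
    | zero => simp
    | succ n ih =>
      simp only [Finset.sum_range_succ]
      linarith [h n]
  refine summable_of_sum_range_le (c := a 0 + ∑' k, c k) hd fun n => ?_
  linarith [hpartial n, ha n, hcs.sum_le_tsum (Finset.range n) fun k _ => hc k]

theorem exists_tendsto_and_summable_of_quasiFejer {a t d c : ℕ → ℝ} (ha : ∀ n, 0 ≤ a n)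
    (hd : ∀ n, 0 ≤ d n) (hc : ∀ n, 0 ≤ c n) (hcs : Summable c)
    (hnext : ∀ n, a (n + 1) ≤ t n + c n) (hstep : ∀ n, t n ^ 2 ≤ a n ^ 2 - d n) :
    (∃ L, Tendsto a atTop (𝓝 L)) ∧ Summable d := by
  have hta : ∀ n, t n ≤ a n := fun n =>
    le_of_sq_le_sq (by linarith [hstep n, hd n]) (ha n)
  obtain ⟨L, hL⟩ := exists_tendsto_of_le_add_summable ha hc hcs fun n => by
    linarith [hnext n, hta n]
  refine ⟨⟨L, hL⟩, ?_⟩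
  obtain ⟨R, hR⟩ := hL.bddAbove_range
  have hcC : ∀ n, c n ≤ ∑' k, c k := fun n => hcs.le_tsum n fun k _ => hc k
  have hR₀ : 0 ≤ 2 * R + ∑' k, c k := by linarith [ha 0, hR (Set.mem_range_self 0), hcC 0, hc 0]
  refine summable_of_le_sub_add_summable (a := fun n => a n ^ 2) (fun n => sq_nonneg _) hd
    (fun n => mul_nonneg hR₀ (hc n)) (hcs.mul_left _) fun n => ?_
  have hsq : a (n + 1) ^ 2 ≤ (t n + c n) ^ 2 := pow_le_pow_left₀ (ha _) (hnext n) 2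
  have htR : t n ≤ R := (hta n).trans (hR (Set.mem_range_self n))
  nlinarith [hstep n, mul_le_mul_of_nonneg_right htR (hc n),
    mul_le_mul_of_nonneg_right (hcC n) (hc n)]

end QuasiFejer

section MonotoneOperators

theorem IsResolvent.inv_smul_sub_mem {E : Type*} [AddCommGroup E] [Module ℝ E] {γ : ℝ}
    {A : E → Set E} {J : E → E} (hJ : IsResolvent γ A J) (hγ : γ ≠ 0) (w : E) :
    γ⁻¹ • (w - J w) ∈ A (J w) := by
  obtain ⟨u, hu, hw⟩ := hJ w
  rwa [sub_eq_of_eq_add' hw, inv_smul_smul₀ hγ]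

variable {E : Type*} [NormedAddCommGroup E] [InnerProductSpace ℝ E]

theorem inner_apply_self_eq_zero_of_skew {S : E →ₗ[ℝ] E}
    (hS : ∀ y z, ⟪S y, z⟫_ℝ = -⟪y, S z⟫_ℝ) (z : E) : ⟪S z, z⟫_ℝ = 0 := by
  have h := hS z z
  rw [real_inner_comm (S z) z] at h
  linarith

/-- The graph of `M + S` is closed for weak convergence in the domain and strong convergence
in the range. -/
theorem neg_apply_mem_of_weakTendstoAlong {ι : Type*} {f : Filter ι} [f.NeBot] {M : E → Set E}
    (hM : MaxMonotone M) {S : E →ₗ[ℝ] E} (hS : ∀ y z, ⟪S y, z⟫_ℝ = -⟪y, S z⟫_ℝ)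
    {q u : ι → E} {l : E} (hu : ∀ i, u i ∈ M (q i)) (hq : WeakTendstoAlong q f l)
    (hqb : IsBoundedUnder (· ≤ ·) f (fun i => ‖q i‖))
    (hnull : Tendsto (fun i => u i + S (q i)) f (𝓝 0)) :
    -S l ∈ M l := by
  refine hM.2 l (-S l) fun y r hr => ?_
  have hexpand : ∀ i, ⟪q i - y, u i - r⟫_ℝ = ⟪q i, u i + S (q i)⟫_ℝ - ⟪y, u i + S (q i)⟫_ℝ
      - ⟪S y, q i⟫_ℝ - ⟪q i, r⟫_ℝ + ⟪y, r⟫_ℝ := fun i => by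
    have h₁ := inner_apply_self_eq_zero_of_skew hS (q i)
    have h₂ := hS y (q i)
    simp only [inner_sub_left, inner_sub_right, inner_add_right,
      real_inner_comm (S (q i))] at h₂ ⊢
    linarith
  have hlim : Tendsto (fun i => ⟪q i - y, u i - r⟫_ℝ) f
      (𝓝 (0 - ⟪y, 0⟫_ℝ - ⟪S y, l⟫_ℝ - ⟪l, r⟫_ℝ + ⟪y, r⟫_ℝ)) := by
    have hqa : Tendsto (fun i => ⟪q i, u i + S (q i)⟫_ℝ) f (𝓝 0) :=
      hnull.op_zero_isBoundedUnder_le hqb (fun a b => ⟪b, a⟫_ℝ) fun a b => by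
        rw [mul_comm]; exact norm_inner_le_norm b a
    have hSy : Tendsto (fun i => ⟪S y, q i⟫_ℝ) f (𝓝 ⟪S y, l⟫_ℝ) := by
      simpa only [real_inner_comm (S y)] using hq (S y)
    simp_rw [hexpand]
    exact (((hqa.sub (tendsto_const_nhds.inner hnull)).sub hSy).sub (hq r)).add
      tendsto_const_nhds
  have hval : ⟪l - y, -S l - r⟫_ℝ = -⟪S y, l⟫_ℝ - ⟪l, r⟫_ℝ + ⟪y, r⟫_ℝ := by
    have h₁ := inner_apply_self_eq_zero_of_skew hS l
    have h₂ := hS y l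
    simp only [inner_sub_left, inner_sub_right, inner_neg_right, real_inner_comm (S l)] at h₂ ⊢
    linarith
  rw [hval]
  simpa using ge_of_tendsto' hlim fun i => hM.1 _ _ _ _ (hu i) hr

end MonotoneOperators

section Tseng

variable {E : Type*} [NormedAddCommGroup E] [InnerProductSpace ℝ E]

/-- Tseng's forward-backward-forward step for `M + S`, where `J` is the resolvent of `γ M`. -/
def tsengStep (J : E → E) (S : E →ₗ[ℝ] E) (γ : ℝ) (z : E) : E :=
  J (z - γ • S z) - γ • S (J (z - γ • S z) - z)

theorem norm_tsengStep_sub_sq_le {M : E → Set E} (hM : MonotoneSV M) {S : E →ₗ[ℝ] E}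
    (hS : ∀ y z, ⟪S y, z⟫_ℝ = -⟪y, S z⟫_ℝ) (hS₁ : ∀ z, ‖S z‖ ≤ ‖z‖) {γ : ℝ} (hγ : 0 < γ)
    {J : E → E} (hJ : IsResolvent γ M J) {y : E} (hy : -S y ∈ M y) (z : E) :
    ‖tsengStep J S γ z - y‖ ^ 2
      ≤ ‖z - y‖ ^ 2 - (1 - γ ^ 2) * ‖z - J (z - γ • S z)‖ ^ 2 := by
  set q := J (z - γ • S z)
  have hmono : 0 ≤ ⟪q - y, γ⁻¹ • (z - γ • S z - q) - -S y⟫_ℝ :=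
    hM _ _ _ _ (hJ.inv_smul_sub_mem hγ.ne' _) hy
  have hkey : γ * ⟪q - y, S (z - q)⟫_ℝ ≤ ⟪q - y, z - q⟫_ℝ := by
    have hsplit : γ⁻¹ • (z - γ • S z - q) - -S y
        = γ⁻¹ • (z - q) - S (z - q) - S (q - y) := by
      simp only [map_sub, smul_sub, smul_smul, inv_mul_cancel₀ hγ.ne', one_smul]
      abel
    rw [hsplit, inner_sub_right, inner_sub_right, real_inner_smul_right,
      real_inner_comm (S (q - y)), inner_apply_self_eq_zero_of_skew hS] at hmono
    have := mul_nonneg hγ.le hmono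
    rw [mul_sub, mul_sub, ← mul_assoc, mul_inv_cancel₀ hγ.ne', one_mul] at this
    linarith
  have hstep : tsengStep J S γ z - y = (q - y) + γ • S (z - q) := by
    simp only [tsengStep, q, map_sub, smul_sub]
    abel
  have hSa : γ ^ 2 * ‖S (z - q)‖ ^ 2 ≤ γ ^ 2 * ‖z - q‖ ^ 2 := by
    gcongr
    exact hS₁ _
  have hz : z - y = (z - q) + (q - y) := by abel
  rw [hstep, hz, norm_add_sq_real, norm_add_sq_real, norm_smul, real_inner_smul_right,
    real_inner_comm (q - y) (z - q), Real.norm_eq_abs, mul_pow, sq_abs]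
  nlinarith

theorem norm_inv_smul_sub_add_le {S : E →ₗ[ℝ] E} (hS₁ : ∀ z, ‖S z‖ ≤ ‖z‖) {ε γ : ℝ}
    (hε : 0 < ε) (hεγ : ε ≤ γ) (z q : E) :
    ‖γ⁻¹ • (z - γ • S z - q) + S q‖ ≤ (ε⁻¹ + 1) * ‖z - q‖ := by
  have hγ : 0 < γ := hε.trans_le hεγ
  have hsplit : γ⁻¹ • (z - γ • S z - q) + S q = γ⁻¹ • (z - q) - S (z - q) := by
    simp only [map_sub, smul_sub, smul_smul, inv_mul_cancel₀ hγ.ne', one_smul]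
    abel
  rw [hsplit, add_mul, one_mul]
  refine (norm_sub_le _ _).trans (add_le_add ?_ (hS₁ _))
  rw [norm_smul, Real.norm_eq_abs, abs_of_pos (inv_pos.mpr hγ)]
  exact mul_le_mul_of_nonneg_right (inv_anti₀ hε hεγ) (norm_nonneg _)

theorem exists_weakTendsto_of_tsengStep [CompleteSpace E] {M : E → Set E} (hM : MaxMonotone M)
    {S : E →ₗ[ℝ] E} (hS : ∀ y z, ⟪S y, z⟫_ℝ = -⟪y, S z⟫_ℝ) (hS₁ : ∀ z, ‖S z‖ ≤ ‖z‖)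
    (hzer : ∃ y, -S y ∈ M y) {ε : ℝ} (hε : 0 < ε) {γ : ℕ → ℝ}
    (hγ : ∀ n, γ n ∈ Set.Icc ε (1 - ε)) {J : ℕ → E → E} (hJ : ∀ n, IsResolvent (γ n) M (J n))
    {e : ℕ → E} (he : Summable fun n => ‖e n‖) {z : ℕ → E}
    (hz : ∀ n, z (n + 1) = tsengStep (J n) S (γ n) (z n) + e n) :
    ∃ l, -S l ∈ M l ∧ WeakTendsto z l := by
  set q : ℕ → E := fun n => J n (z n - γ n • S (z n))
  have hγ₀ : ∀ n, 0 < γ n := fun n => hε.trans_le (hγ n).1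
  have hfejer : ∀ y, -S y ∈ M y → (∃ L, Tendsto (fun n => ‖z n - y‖) atTop (𝓝 L)) ∧
      Summable fun n => ε * ‖z n - q n‖ ^ 2 := fun y hy => by
    refine exists_tendsto_and_summable_of_quasiFejer
      (t := fun n => ‖tsengStep (J n) S (γ n) (z n) - y‖) (fun n => norm_nonneg _)
      (fun n => by positivity) (fun n => norm_nonneg _) he (fun n => ?_) fun n => ?_
    · rw [hz n, add_sub_right_comm]
      exact norm_add_le _ _
    · have hγε : ε ≤ 1 - γ n ^ 2 := by nlinarith [(hγ n).1, (hγ n).2]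
      have := norm_tsengStep_sub_sq_le hM.1 hS hS₁ (hγ₀ n) (hJ n) hy (z n)
      nlinarith [sq_nonneg ‖z n - q n‖]
  obtain ⟨y₀, hy₀⟩ := hzer
  obtain ⟨⟨L₀, hL₀⟩, hsum⟩ := hfejer y₀ hy₀
  have hgap : Tendsto (fun n => ‖z n - q n‖) atTop (𝓝 0) := by
    have hsq : Tendsto (fun n => ‖z n - q n‖ ^ 2) atTop (𝓝 0) := by
      simpa [hε.ne'] using (hsum.mul_left ε⁻¹).tendsto_atTop_zero
    simpa [Function.comp_def, Real.sqrt_sq_eq_abs] using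
      (Real.continuous_sqrt.tendsto 0).comp hsq
  have hqb : IsBoundedUnder (· ≤ ·) atTop (fun n => ‖q n‖) :=
    ((hL₀.add hgap).add_const ‖y₀‖).isBoundedUnder_le.mono_le <| Eventually.of_forall fun n => by
      have h₁ := norm_sub_le (z n - y₀) (z n - q n)
      have h₂ := norm_add_le (q n - y₀) y₀
      simp only [sub_sub_sub_cancel_left, sub_add_cancel] at h₁ h₂
      dsimp only
      linarith [norm_sub_rev y₀ (q n)]
  have hnull :
      Tendsto (fun n => (γ n)⁻¹ • (z n - γ n • S (z n) - q n) + S (q n)) atTop (𝓝 0) :=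
    tendsto_zero_iff_norm_tendsto_zero.mpr <| squeeze_zero (fun n => norm_nonneg _)
      (fun n => norm_inv_smul_sub_add_le hS₁ hε (hγ n).1 _ _)
      (by simpa using hgap.const_mul (ε⁻¹ + 1))
  refine exists_weakTendsto_of_tendsto_norm_sub ⟨y₀, hy₀⟩ (fun y hy => (hfejer y hy).1)
    fun U l hU hzl => ?_
  exact neg_apply_mem_of_weakTendstoAlong hM hS
    (fun n => (hJ n).inv_smul_sub_mem (hγ₀ n).ne' _)
    (hzl.of_tendsto_norm_sub (hgap.mono_left hU)) (hqb.mono hU) (hnull.mono_left hU)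

theorem exists_weakTendsto_tseng [CompleteSpace E] {M : E → Set E} (hM : MaxMonotone M)
    {S : E →ₗ[ℝ] E} (hS : ∀ y z, ⟪S y, z⟫_ℝ = -⟪y, S z⟫_ℝ) (hS₁ : ∀ z, ‖S z‖ ≤ ‖z‖)
    (hzer : ∃ y, -S y ∈ M y) {ε : ℝ} (hε : 0 < ε) {γ : ℕ → ℝ}
    (hγ : ∀ n, γ n ∈ Set.Icc ε (1 - ε)) {J : ℕ → E → E} (hJ : ∀ n, IsResolvent (γ n) M (J n))
    {b : ℕ → E} (hb : Summable fun n => ‖b n‖) {z p : ℕ → E}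
    (hp : ∀ n, p n = J n (z n - γ n • S (z n)) + b n)
    (hz : ∀ n, z (n + 1) = p n - γ n • S (p n - z n)) :
    ∃ l, -S l ∈ M l ∧ WeakTendsto z l := by
  refine exists_weakTendsto_of_tsengStep hM hS hS₁ hzer hε hγ hJ
    (e := fun n => b n - γ n • S (b n)) ?_ fun n => ?_
  · refine Summable.of_nonneg_of_le (fun n => norm_nonneg _) (fun n => ?_) (hb.mul_left 2)
    have hγb : ‖γ n • S (b n)‖ ≤ ‖b n‖ := by
      rw [norm_smul, Real.norm_eq_abs, abs_of_pos (hε.trans_le (hγ n).1)]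
      exact (mul_le_of_le_one_left (norm_nonneg _) (by linarith [(hγ n).2])).trans (hS₁ _)
    linarith [norm_sub_le (b n) (γ n • S (b n))]
  · rw [hz n, hp n, tsengStep]
    simp only [map_add, map_sub, smul_add, smul_sub]
    abel

end Tseng

section Product

theorem norm_toLp_prod_le {α β : Type*} [SeminormedAddCommGroup α] [SeminormedAddCommGroup β]
    (a : α) (b : β) : ‖WithLp.toLp 2 (a, b)‖ ≤ ‖a‖ + ‖b‖ := by
  have h : WithLp.toLp 2 (a, b) = WithLp.toLp 2 (a, 0) + WithLp.toLp 2 (0, b) := by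
    rw [← WithLp.toLp_add, Prod.mk_add_mk, add_zero, zero_add]
  rw [h, ← WithLp.norm_toLp_fst 2 α β a, ← WithLp.norm_toLp_snd 2 α β b]
  exact norm_add_le _ _

variable {H₁ H₂ : Type*} [NormedAddCommGroup H₁] [InnerProductSpace ℝ H₁]
  [NormedAddCommGroup H₂] [InnerProductSpace ℝ H₂]

def prodOp (A : H₁ → Set H₁) (B : H₂ → Set H₂) :
    WithLp 2 (H₁ × H₂) → Set (WithLp 2 (H₁ × H₂)) :=
  fun p => {u | u.fst ∈ A p.fst ∧ u.snd ∈ B p.snd}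

def invOp (A : H₁ → Set H₁) : H₁ → Set H₁ :=
  fun w => {g | w ∈ A g}

theorem MaxMonotone.invOp {A : H₁ → Set H₁} (hA : MaxMonotone A) : MaxMonotone (invOp A) := by
  refine ⟨fun x y u v hu hv => ?_, fun x u h => hA.2 u x fun y v hv => ?_⟩
  · rw [real_inner_comm]
    exact hA.1 _ _ _ _ hu hv
  · rw [real_inner_comm]
    exact h v y hv

theorem MaxMonotone.prodOp {A : H₁ → Set H₁} {B : H₂ → Set H₂} (hA : MaxMonotone A)
    (hB : MaxMonotone B) : MaxMonotone (prodOp A B) := by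
  refine ⟨fun p p' u u' hu hu' =>
    add_nonneg (hA.1 _ _ _ _ hu.1 hu'.1) (hB.1 _ _ _ _ hu.2 hu'.2), fun p u h => ?_⟩
  have hsum : ∀ y r, r ∈ A y → ∀ y' r', r' ∈ B y' →
      0 ≤ ⟪p.fst - y, u.fst - r⟫_ℝ + ⟪p.snd - y', u.snd - r'⟫_ℝ :=
    fun y r hr y' r' hr' => h (WithLp.toLp 2 (y, y')) (WithLp.toLp 2 (r, r')) ⟨hr, hr'⟩
  -- If the `A`-part of the pairing were negative somewhere, the `B`-part would be positive
  -- everywhere, forcing `u.snd ∈ B p.snd`; testing at that point gives a contradiction.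
  have hfst : u.fst ∈ A p.fst := by
    refine hA.2 _ _ fun y r hr => ?_
    by_contra! hneg
    have hsnd : u.snd ∈ B p.snd :=
      hB.2 _ _ fun y' r' hr' => by linarith [hsum y r hr y' r' hr']
    have := hsum y r hr _ _ hsnd
    simp only [sub_self, inner_zero_left, add_zero] at this
    linarith
  exact ⟨hfst, hB.2 _ _ fun y' r' hr' => by simpa using hsum _ _ hfst y' r' hr'⟩

theorem IsResolvent.prodOp {γ : ℝ} {A : H₁ → Set H₁} {B : H₂ → Set H₂} {J₁ : H₁ → H₁}
    {J₂ : H₂ → H₂} (h₁ : IsResolvent γ A J₁) (h₂ : IsResolvent γ B J₂) :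
    IsResolvent γ (prodOp A B) (fun p => WithLp.toLp 2 (J₁ p.fst, J₂ p.snd)) := by
  intro w
  obtain ⟨u₁, hu₁, hw₁⟩ := h₁ w.fst
  obtain ⟨u₂, hu₂, hw₂⟩ := h₂ w.snd
  exact ⟨WithLp.toLp 2 (u₁, u₂), ⟨hu₁, hu₂⟩, WithLp.ofLp_injective 2 (Prod.ext hw₁ hw₂)⟩

theorem WeakTendsto.fst {z : ℕ → WithLp 2 (H₁ × H₂)} {l : WithLp 2 (H₁ × H₂)}
    (h : WeakTendsto z l) : WeakTendsto (fun n => (z n).fst) l.fst :=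
  fun w => by simpa using h (WithLp.toLp 2 (w, 0))

theorem WeakTendsto.snd {z : ℕ → WithLp 2 (H₁ × H₂)} {l : WithLp 2 (H₁ × H₂)}
    (h : WeakTendsto z l) : WeakTendsto (fun n => (z n).snd) l.snd :=
  fun w => by simpa using h (WithLp.toLp 2 (0, w))

variable {H : Type*} [NormedAddCommGroup H] [InnerProductSpace ℝ H]

def quarterTurn : WithLp 2 (H × H) →ₗ[ℝ] WithLp 2 (H × H) where
  toFun p := WithLp.toLp 2 (p.snd, -p.fst)
  map_add' _ _ := WithLp.ofLp_injective 2 (Prod.ext rfl (neg_add _ _))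
  map_smul' c _ := WithLp.ofLp_injective 2 (Prod.ext rfl (smul_neg c _).symm)

theorem inner_quarterTurn_left (p p' : WithLp 2 (H × H)) :
    ⟪quarterTurn p, p'⟫_ℝ = -⟪p, quarterTurn p'⟫_ℝ := by
  simp [quarterTurn]

theorem norm_quarterTurn (p : WithLp 2 (H × H)) : ‖quarterTurn p‖ = ‖p‖ := by
  rw [← sq_eq_sq₀ (norm_nonneg _) (norm_nonneg _), WithLp.prod_norm_sq_eq_of_L2,
    WithLp.prod_norm_sq_eq_of_L2]
  simp [quarterTurn, add_comm]

theorem neg_quarterTurn_mem_prodOp_invOp_iff {A B : H → Set H} {p : WithLp 2 (H × H)} :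
    -quarterTurn p ∈ prodOp A (invOp B) p ↔ -p.snd ∈ A p.fst ∧ p.snd ∈ B p.fst := by
  simp [quarterTurn, prodOp, invOp]

end Product

theorem stmt_16 {H : Type*} [NormedAddCommGroup H] [InnerProductSpace ℝ H] [CompleteSpace H]
    (A₁ A₂ : H → Set H) (hA₁ : MaxMonotone A₁) (hA₂ : MaxMonotone A₂)
    (hzer : ∃ w : H, ∃ u ∈ A₁ w, ∃ s ∈ A₂ w, u + s = 0)
    (b₁ b₂ : ℕ → H)
    (hb₁ : Summable fun n => ‖b₁ n‖) (hb₂ : Summable fun n => ‖b₂ n‖)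
    (ε : ℝ) (hε : ε ∈ Set.Ioo (0:ℝ) (1 / 2))
    (γ : ℕ → ℝ) (hγ : ∀ n, γ n ∈ Set.Icc ε (1 - ε))
    (J₁ : ℕ → H → H) (hJ₁ : ∀ n, IsResolvent (γ n) A₁ (J₁ n))
    (J₂ : ℕ → H → H) (hJ₂ : ∀ n, IsResolvent (γ n) (fun w => {g : H | w ∈ A₂ g}) (J₂ n))
    (x v p₁ p₂ : ℕ → H)
    (hp₁ : ∀ n, p₁ n = J₁ n (x n - γ n • v n) + b₁ n)
    (hp₂ : ∀ n, p₂ n = J₂ n (v n + γ n • x n) + b₂ n)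
    (hx : ∀ n, x (n + 1) = p₁ n + γ n • (v n - p₂ n))
    (hv : ∀ n, v (n + 1) = p₂ n + γ n • (p₁ n - x n)) :
    ∃ (xb vb : H),
      (∃ u ∈ A₁ xb, ∃ s ∈ A₂ xb, u + s = 0) ∧
      (∃ s t : H, -vb ∈ A₁ s ∧ vb ∈ A₂ t ∧ -s + t = 0) ∧
      -vb ∈ A₁ xb ∧ vb ∈ A₂ xb ∧
      WeakTendsto x xb ∧ WeakTendsto v vb := by
  obtain ⟨hε₀, -⟩ := hε
  set z : ℕ → WithLp 2 (H × H) := fun n => WithLp.toLp 2 (x n, v n)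
  set b : ℕ → WithLp 2 (H × H) := fun n => WithLp.toLp 2 (b₁ n, b₂ n)
  set J : ℕ → WithLp 2 (H × H) → WithLp 2 (H × H) :=
    fun n p => WithLp.toLp 2 (J₁ n p.fst, J₂ n p.snd)
  have hJ : ∀ n, IsResolvent (γ n) (prodOp A₁ (invOp A₂)) (J n) :=
    fun n => (hJ₁ n).prodOp (hJ₂ n)
  set p : ℕ → WithLp 2 (H × H) := fun n => WithLp.toLp 2 (p₁ n, p₂ n)
  have hp : ∀ n, p n = J n (z n - γ n • quarterTurn (z n)) + b n := fun n =>
    WithLp.ofLp_injective 2 (Prod.ext (by simp [p, z, b, J, quarterTurn, hp₁])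
      (by simp [p, z, b, J, quarterTurn, hp₂]))
  have hz : ∀ n, z (n + 1) = p n - γ n • quarterTurn (p n - z n) := fun n =>
    WithLp.ofLp_injective 2 (Prod.ext (by simp [p, z, quarterTurn, hx]; module)
      (by simp [p, z, quarterTurn, hv]; module))
  have hb : Summable fun n => ‖b n‖ :=
    (hb₁.add hb₂).of_nonneg_of_le (fun n => norm_nonneg _) fun n => norm_toLp_prod_le _ _
  have hzer' : ∃ y, -quarterTurn y ∈ prodOp A₁ (invOp A₂) y := by
    obtain ⟨w, u, hu, s, hs, hus⟩ := hzer
    refine ⟨WithLp.toLp 2 (w, s), neg_quarterTurn_mem_prodOp_invOp_iff.mpr ⟨?_, hs⟩⟩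
    simpa [eq_neg_of_add_eq_zero_left hus] using hu
  obtain ⟨l, hl, hlim⟩ := exists_weakTendsto_tseng (hA₁.prodOp hA₂.invOp)
    inner_quarterTurn_left (fun p => (norm_quarterTurn p).le) hzer' hε₀ hγ hJ hb hp hz
  obtain ⟨hl₁, hl₂⟩ := neg_quarterTurn_mem_prodOp_invOp_iff.mp hl
  exact ⟨l.fst, l.snd, ⟨_, hl₁, _, hl₂, neg_add_cancel _⟩,
    ⟨l.fst, l.fst, hl₁, hl₂, neg_add_cancel _⟩, hl₁, hl₂, hlim.fst, hlim.snd⟩
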